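/- arXiv:2502.16397 — 6 statements merged into one kernel-verified Lean document; each statement's English description precedes it below -/
import Mathlib

section
/- Let I ⊂ ℝ be a finite interval, k ≥ 1 an integer, and f ∈ C^k(I, ℝ) with inf_{x∈I} |f^{(k)}(x)| ≥ A > 0. Then for all ζ > 0, the Lebesgue measure of {x ∈ I : |f(x)| ≤ ζ} is at most C_k (ζ/A)^{1/k}, where C_k = k(k+1)[(k+1)!]^{1/k}. -/
/-!
If `E = {x ∈ [a, b] | |f x| ≤ ζ}` has measure `μ > 0`, its `(i + 1) / (k + 1)`-quantiles are
`k + 1` points of `E` at mutual distance at least `d = μ / (k + 1)`. The Lagrange polynomial `p`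
interpolating `f` at these points has `|p.coeff k| ≤ (k + 1) ζ / d ^ k`, and `f - p`, having
`k + 1` zeros, has a `k`-th derivative vanishing somewhere (Rolle, `k` times). There
`A ≤ |f⁽ᵏ⁾| = k! |p.coeff k| ≤ (k + 1)! ζ / d ^ k`, which bounds `μ`.
-/

open MeasureTheory Polynomial Set Finset
open scoped Nat

noncomputable def volumeIic (E : Set ℝ) (t : ℝ) : ℝ := (volume (E ∩ Iic t)).toReal

section volumeIic

variable {E : Set ℝ}

lemma volumeIic_add_volume_inter_Ioc (hE : volume E ≠ ⊤) {s t : ℝ} (hst : s ≤ t) :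
    volumeIic E s + (volume (E ∩ Ioc s t)).toReal = volumeIic E t := by
  have hfin : ∀ F ⊆ E, volume F ≠ ⊤ := fun F hF => ne_top_of_le_ne_top hE (measure_mono hF)
  have hsplit := measure_inter_add_sdiff (μ := volume) (E ∩ Iic t) (measurableSet_Iic (a := s))
  rw [inter_assoc, Iic_inter_Iic, min_eq_right hst, inter_sdiff_assoc, Iic_sdiff_Iic] at hsplit
  rw [volumeIic, volumeIic, ← ENNReal.toReal_add (hfin _ inter_subset_left)
    (hfin _ inter_subset_left), hsplit]

lemma monotone_volumeIic (hE : volume E ≠ ⊤) : Monotone (volumeIic E) := fun s t hst => by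
  rw [← volumeIic_add_volume_inter_Ioc hE hst]
  exact le_add_of_nonneg_right ENNReal.toReal_nonneg

lemma volumeIic_le_add_sub (hE : volume E ≠ ⊤) {s t : ℝ} (hst : s ≤ t) :
    volumeIic E t ≤ volumeIic E s + (t - s) := by
  rw [← volumeIic_add_volume_inter_Ioc hE hst]
  gcongr
  calc (volume (E ∩ Ioc s t)).toReal ≤ (volume (Ioc s t)).toReal :=
        ENNReal.toReal_mono (by simp) (measure_mono inter_subset_right)
    _ = t - s := by simp [hst]

lemma lipschitzWith_volumeIic (hE : volume E ≠ ⊤) : LipschitzWith 1 (volumeIic E) := by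
  refine LipschitzWith.of_le_add fun s t => ?_
  rcases le_total s t with hst | hts
  · exact (monotone_volumeIic hE hst).trans (le_add_of_nonneg_right dist_nonneg)
  · simpa [Real.dist_eq, abs_of_nonneg (sub_nonneg.2 hts)] using volumeIic_le_add_sub hE hts

lemma volumeIic_of_lt_of_mem_lowerBounds {a t : ℝ} (ha : a ∈ lowerBounds E) (ht : t < a) :
    volumeIic E t = 0 := by
  have : E ∩ Iic t = ∅ :=
    eq_empty_of_forall_notMem fun x ⟨hx, hxt⟩ => (ha hx).not_gt (lt_of_le_of_lt hxt ht)
  simp [volumeIic, this]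

lemma volumeIic_of_mem_upperBounds {b : ℝ} (hb : b ∈ upperBounds E) :
    volumeIic E b = (volume E).toReal := by
  rw [volumeIic, inter_eq_left.2 (show E ⊆ Iic b from fun x hx => hb hx)]

/-- The least `t` at which `volumeIic E` reaches `c` lies in `E`, because `volumeIic E` is
constant on every gap of `E`. -/
lemma IsCompact.exists_mem_volumeIic_eq (hE : IsCompact E) {c : ℝ} (hc : 0 < c)
    (hcE : c ≤ (volume E).toReal) : ∃ e ∈ E, volumeIic E e = c := by
  have hfin := hE.measure_lt_top (μ := volume) |>.ne
  have hcont := (lipschitzWith_volumeIic hfin).continuous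
  obtain ⟨a, ha⟩ := hE.bddBelow
  obtain ⟨b, hb⟩ := hE.bddAbove
  set S := {t | c ≤ volumeIic E t}
  have hS : ∀ t, t < a → t ∉ S := fun t ht hS =>
    hc.not_ge (by simpa [S, volumeIic_of_lt_of_mem_lowerBounds ha ht] using hS)
  have hSbdd : BddBelow S := ⟨a, fun t ht => not_lt.1 fun h => hS t h ht⟩
  have hbS : b ∈ S := by simpa [S, volumeIic_of_mem_upperBounds hb] using hcE
  have hmem : sInf S ∈ S := (isClosed_le continuous_const hcont).csInf_mem ⟨b, hbS⟩ hSbdd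
  have hmin : ∀ t < sInf S, volumeIic E t < c := fun t ht =>
    not_le.1 fun h => ht.not_ge (csInf_le hSbdd h)
  refine ⟨sInf S, ?_, ?_⟩
  · by_contra hnot
    obtain ⟨δ, hδ, hball⟩ := Metric.isOpen_iff.1 hE.isClosed.isOpen_compl _ hnot
    have hgap : E ∩ Ioc (sInf S - δ / 2) (sInf S) = ∅ :=
      eq_empty_of_forall_notMem fun x ⟨hx, hx1, hx2⟩ => hball
        (by rw [Real.ball_eq_Ioo]; constructor <;> linarith) hx
    have hflat : volumeIic E (sInf S - δ / 2) = volumeIic E (sInf S) := by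
      simpa [hgap] using
        volumeIic_add_volume_inter_Ioc hfin (by linarith : sInf S - δ / 2 ≤ sInf S)
    exact (hmin (sInf S - δ / 2) (by linarith)).not_ge (by rw [hflat]; exact hmem)
  · have haS : a ≤ sInf S := not_lt.1 fun h => hS _ h hmem
    have h₀ : volumeIic E (a - 1) = 0 := volumeIic_of_lt_of_mem_lowerBounds ha (by linarith)
    obtain ⟨t, ht, htc⟩ := intermediate_value_Icc (by linarith : a - 1 ≤ sInf S)
      hcont.continuousOn ⟨h₀ ▸ hc.le, hmem⟩
    have : sInf S ≤ t := csInf_le hSbdd (show c ≤ volumeIic E t from htc.ge)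
    rwa [le_antisymm ht.2 this] at htc

end volumeIic

lemma IsCompact.exists_strictMono_separated {E : Set ℝ} (hE : IsCompact E) (k : ℕ)
    (hpos : 0 < (volume E).toReal) :
    ∃ e : Fin (k + 1) → ℝ, StrictMono e ∧ (∀ i, e i ∈ E) ∧
      ∀ i j, i ≠ j → (volume E).toReal / (k + 1) ≤ |e i - e j| := by
  set d := (volume E).toReal / (k + 1)
  have hd : 0 < d := by positivity
  have hq : ∀ i : Fin (k + 1), ∃ e ∈ E, volumeIic E e = (i + 1) * d := fun i =>
    hE.exists_mem_volumeIic_eq (by positivity) <| calc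
      ((i : ℝ) + 1) * d ≤ (k + 1) * d := by gcongr; exact_mod_cast i.is_le
      _ = (volume E).toReal := by simp only [d]; field_simp
  choose e heE hFe using hq
  have hfin := hE.measure_lt_top (μ := volume) |>.ne
  refine ⟨e, fun i j hij => (monotone_volumeIic hfin).reflect_lt ?_, heE, fun i j hij => ?_⟩
  · rw [hFe, hFe]; gcongr; exact_mod_cast hij
  · have := (lipschitzWith_volumeIic hfin).dist_le_mul (e i) (e j)
    rw [hFe, hFe, Real.dist_eq, Real.dist_eq, NNReal.coe_one, one_mul, ← sub_mul, abs_mul,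
      abs_of_pos hd] at this
    refine le_trans (le_mul_of_one_le_left hd.le ?_) this
    have hij' : ((i : ℕ) : ℤ) - j ≠ 0 := sub_ne_zero.2 (by exact_mod_cast Fin.val_ne_of_ne hij)
    rw [add_sub_add_right_eq_sub]
    exact_mod_cast Int.one_le_abs hij'

lemma exists_strictMono_zeros_of_hasDerivAt {f f' : ℝ → ℝ} {a b : ℝ} {n : ℕ}
    (hf : ContinuousOn f (Icc a b)) (hf' : ∀ x ∈ Ioo a b, HasDerivAt f (f' x) x)
    {e : Fin (n + 2) → ℝ} (he : StrictMono e) (hea : ∀ i, e i ∈ Icc a b)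
    (hz : ∀ i, f (e i) = 0) :
    ∃ c : Fin (n + 1) → ℝ, StrictMono c ∧ (∀ i, c i ∈ Icc a b) ∧ ∀ i, f' (c i) = 0 := by
  have hrolle : ∀ i : Fin (n + 1), ∃ c ∈ Ioo (e i.castSucc) (e i.succ), f' c = 0 := fun i =>
    exists_hasDerivAt_eq_zero (he Fin.castSucc_lt_succ)
      (hf.mono (Icc_subset_Icc (hea _).1 (hea _).2)) ((hz _).trans (hz _).symm)
      fun x hx => hf' x (Ioo_subset_Ioo (hea _).1 (hea _).2 hx)
  choose c hc hc0 using hrolle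
  refine ⟨c, Fin.strictMono_iff_lt_succ.2 fun i => ?_, fun i => ?_, hc0⟩
  · calc c i.castSucc < e i.castSucc.succ := (hc _).2
      _ = e i.succ.castSucc := by rw [Fin.succ_castSucc]
      _ < c i.succ := (hc _).1
  · exact ⟨(hea _).1.trans (hc i).1.le, (hc i).2.le.trans (hea _).2⟩

theorem exists_iteratedDerivWithin_eq_zero {f : ℝ → ℝ} {a b : ℝ} {n : ℕ}
    (hf : ContDiffOn ℝ n f (Icc a b)) {e : Fin (n + 1) → ℝ} (he : StrictMono e)
    (hea : ∀ i, e i ∈ Icc a b) (hz : ∀ i, f (e i) = 0) :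
    ∃ ξ ∈ Icc a b, iteratedDerivWithin n f (Icc a b) ξ = 0 := by
  induction n generalizing f with
  | zero => exact ⟨e 0, hea 0, by simpa using hz 0⟩
  | succ n ih =>
    have hab : a < b := ((hea 0).1.trans_lt (he Fin.zero_lt_one)).trans_le (hea 1).2
    have hs := uniqueDiffOn_Icc hab
    have hderiv : ∀ x ∈ Ioo a b, HasDerivAt f (derivWithin f (Icc a b) x) x := fun x hx =>
      (hf.differentiableOn (by simp) x (Ioo_subset_Icc_self hx)).hasDerivWithinAt.hasDerivAt
        (Icc_mem_nhds hx.1 hx.2)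
    obtain ⟨c, hc, hca, hc0⟩ :=
      exists_strictMono_zeros_of_hasDerivAt hf.continuousOn hderiv he hea hz
    rw [iteratedDerivWithin_succ']
    exact ih (hf.derivWithin hs (by simp)) hc hca hc0

lemma iteratedDeriv_eval (p : ℝ[X]) (n : ℕ) :
    iteratedDeriv n (fun x => p.eval x) = fun x => (derivative^[n] p).eval x := by
  induction n generalizing p with
  | zero => simp
  | succ n ih =>
    rw [iteratedDeriv_succ', Function.iterate_succ_apply, ← ih]
    congr 1
    exact funext fun x => p.deriv

lemma iterate_derivative_eq_C_of_natDegree_le {p : ℝ[X]} {n : ℕ} (hp : p.natDegree ≤ n) :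
    derivative^[n] p = C (n ! * p.coeff n) := by
  have hdeg : (derivative^[n] p).natDegree = 0 := by
    have := p.natDegree_iterate_derivative n
    omega
  rw [eq_C_of_natDegree_eq_zero hdeg, coeff_iterate_derivative]
  simp [Nat.descFactorial_self, nsmul_eq_mul]

theorem exists_iteratedDerivWithin_eq_of_interpolates {f : ℝ → ℝ} {a b : ℝ} (hab : a < b) {n : ℕ}
    (hf : ContDiffOn ℝ n f (Icc a b)) {p : ℝ[X]} (hp : p.natDegree ≤ n) {e : Fin (n + 1) → ℝ}
    (he : StrictMono e) (hea : ∀ i, e i ∈ Icc a b) (hfp : ∀ i, f (e i) = p.eval (e i)) :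
    ∃ ξ ∈ Icc a b, iteratedDerivWithin n f (Icc a b) ξ = n ! * p.coeff n := by
  have hs := uniqueDiffOn_Icc hab
  have hp' : ContDiff ℝ n fun x => p.eval x := by simpa using p.contDiff_aeval (𝕜 := ℝ) n
  obtain ⟨ξ, hξ, h0⟩ := exists_iteratedDerivWithin_eq_zero (hf.sub hp'.contDiffOn) he hea
    fun i => sub_eq_zero.2 (hfp i)
  refine ⟨ξ, hξ, ?_⟩
  change iteratedDerivWithin n (f - fun x => p.eval x) _ _ = 0 at h0
  rw [iteratedDerivWithin_sub hξ hs (hf ξ hξ) hp'.contDiffWithinAt,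
    iteratedDerivWithin_eq_iteratedDeriv hs hp'.contDiffAt hξ, iteratedDeriv_eval,
    iterate_derivative_eq_C_of_natDegree_le hp] at h0
  simpa [sub_eq_zero] using h0

lemma abs_coeff_basis_le {n : ℕ} {e : Fin (n + 1) → ℝ} (he : Function.Injective e) {d : ℝ}
    (hd : 0 < d) (hsep : ∀ i j, i ≠ j → d ≤ |e i - e j|) (i : Fin (n + 1)) :
    |(Lagrange.basis univ e i).coeff n| ≤ (d ^ n)⁻¹ := by
  have hdeg : (Lagrange.basis univ e i).natDegree = n := by
    simp [Lagrange.natDegree_basis he.injOn (mem_univ i)]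
  have hlc : (Lagrange.basis univ e i).coeff n = (Lagrange.basis univ e i).leadingCoeff := by
    rw [leadingCoeff, hdeg]
  rw [hlc, Lagrange.leadingCoeff_basis he.injOn (mem_univ i), abs_inv, abs_prod]
  refine inv_anti₀ (by positivity) ?_
  calc d ^ n = ∏ _j ∈ univ.erase i, d := by simp
    _ ≤ ∏ j ∈ univ.erase i, |e i - e j| :=
      prod_le_prod (fun _ _ => hd.le) fun j hj => hsep i j (ne_of_mem_erase hj).symm

lemma abs_coeff_interpolate_le {n : ℕ} {e r : Fin (n + 1) → ℝ} (he : Function.Injective e)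
    {d ζ : ℝ} (hd : 0 < d) (hsep : ∀ i j, i ≠ j → d ≤ |e i - e j|) (hr : ∀ i, |r i| ≤ ζ) :
    |(Lagrange.interpolate univ e r).coeff n| ≤ (n + 1) * ζ / d ^ n := by
  rw [Lagrange.interpolate_apply, finsetSum_coeff]
  calc |∑ i, (C (r i) * Lagrange.basis univ e i).coeff n|
      ≤ ∑ i, |(C (r i) * Lagrange.basis univ e i).coeff n| := abs_sum_le_sum_abs _ _
    _ = ∑ i, |r i| * |(Lagrange.basis univ e i).coeff n| := by simp only [coeff_C_mul, abs_mul]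
    _ ≤ ∑ _i : Fin (n + 1), ζ * (d ^ n)⁻¹ := by
        gcongr with i
        exacts [(abs_nonneg _).trans (hr 0), hr i, abs_coeff_basis_le he hd hsep i]
    _ = (n + 1) * ζ / d ^ n := by simp [div_eq_mul_inv, mul_assoc]

theorem exists_abs_iteratedDerivWithin_le_of_separated {f : ℝ → ℝ} {a b : ℝ} (hab : a < b)
    {k : ℕ} (hf : ContDiffOn ℝ k f (Icc a b)) {e : Fin (k + 1) → ℝ} (he : StrictMono e)
    (hea : ∀ i, e i ∈ Icc a b) {d ζ : ℝ} (hd : 0 < d) (hsep : ∀ i j, i ≠ j → d ≤ |e i - e j|)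
    (hfe : ∀ i, |f (e i)| ≤ ζ) :
    ∃ ξ ∈ Icc a b, |iteratedDerivWithin k f (Icc a b) ξ| ≤ (k + 1)! * ζ / d ^ k := by
  set p := Lagrange.interpolate univ e (fun i => f (e i))
  have hp : p.natDegree ≤ k :=
    natDegree_le_of_degree_le <| (Lagrange.degree_interpolate_le _ he.injective.injOn).trans
      (by simp)
  obtain ⟨ξ, hξ, hξp⟩ := exists_iteratedDerivWithin_eq_of_interpolates hab hf hp he hea fun i =>
    (Lagrange.eval_interpolate_at_node (fun i => f (e i)) he.injective.injOn (mem_univ i)).symm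
  refine ⟨ξ, hξ, ?_⟩
  calc |iteratedDerivWithin k f (Icc a b) ξ| = k ! * |p.coeff k| := by
        rw [hξp, abs_mul, Nat.abs_cast]
    _ ≤ k ! * ((k + 1) * ζ / d ^ k) := by
        gcongr; exact abs_coeff_interpolate_le he.injective hd hsep hfe
    _ = (k + 1)! * ζ / d ^ k := by push_cast [Nat.factorial_succ]; ring

lemma le_mul_rpow_of_le_div_pow {k : ℕ} (hk : 1 ≤ k) {A ζ μ : ℝ} (hA : 0 < A) (hζ : 0 ≤ ζ)
    (hμ : 0 < μ) (h : A ≤ (k + 1)! * ζ / (μ / (k + 1)) ^ k) :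
    μ ≤ k * (k + 1) * ((k + 1)! : ℝ) ^ ((1 : ℝ) / k) * (ζ / A) ^ ((1 : ℝ) / k) := by
  set d := μ / (k + 1)
  have hd : 0 < d := by positivity
  have hdk : d ^ k ≤ (k + 1)! * (ζ / A) := by
    rw [le_div_iff₀ (by positivity)] at h
    rw [← mul_div_assoc, le_div_iff₀ hA]
    linarith
  have hdle : d ≤ ((k + 1)! : ℝ) ^ ((1 : ℝ) / k) * (ζ / A) ^ ((1 : ℝ) / k) := by
    rw [← Real.mul_rpow (by positivity) (by positivity), one_div,
      Real.le_rpow_inv_iff_of_pos hd.le (by positivity) (by positivity), Real.rpow_natCast]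
    exact hdk
  calc μ = (k + 1) * d := by simp only [d]; field_simp
    _ ≤ (k + 1) * (((k + 1)! : ℝ) ^ ((1 : ℝ) / k) * (ζ / A) ^ ((1 : ℝ) / k)) := by gcongr
    _ ≤ k * ((k + 1) * (((k + 1)! : ℝ) ^ ((1 : ℝ) / k) * (ζ / A) ^ ((1 : ℝ) / k))) :=
        le_mul_of_one_le_left (by positivity) (by exact_mod_cast hk)
    _ = _ := by ring

/-- Kleinbock–Margulis type lemma: if the `k`-th derivative of `f` is bounded below
in absolute value by `A > 0` on a finite interval, then the sublevel set
`{x ∈ I : |f x| ≤ ζ}` has measure at most `C_k (ζ/A)^{1/k}` with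
`C_k = k(k+1)[(k+1)!]^{1/k}`. -/
theorem stmt0 (k : ℕ) (hk : 1 ≤ k) (a b : ℝ) (f : ℝ → ℝ) (A ζ : ℝ)
    (hA : 0 < A) (hζ : 0 < ζ)
    (hf : ContDiffOn ℝ k f (Set.Icc a b))
    (hder : ∀ x ∈ Set.Icc a b, A ≤ |iteratedDerivWithin k f (Set.Icc a b) x|) :
    volume {x ∈ Set.Icc a b | |f x| ≤ ζ} ≤
      ENNReal.ofReal (((k : ℝ) * (k + 1) * ((Nat.factorial (k + 1) : ℝ)) ^ ((1 : ℝ) / k)) *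
        (ζ / A) ^ ((1 : ℝ) / k)) := by
  set E := {x ∈ Icc a b | |f x| ≤ ζ}
  have hE : IsCompact E := isCompact_Icc.of_isClosed_subset
    (hf.continuousOn.preimage_isClosed_of_isClosed isClosed_Icc
      (isClosed_le continuous_abs continuous_const)) (sep_subset _ _)
  rw [ENNReal.le_ofReal_iff_toReal_le hE.measure_lt_top.ne (by positivity)]
  rcases ENNReal.toReal_nonneg.eq_or_lt with h0 | hpos
  · rw [← h0]; positivity
  have hab : a < b := by
    by_contra! hba
    have : volume E = 0 := measure_mono_null (sep_subset _ _) (by simp [hba])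
    simp [this] at hpos
  obtain ⟨e, he, heE, hsep⟩ := hE.exists_strictMono_separated k hpos
  obtain ⟨ξ, hξ, hξle⟩ := exists_abs_iteratedDerivWithin_le_of_separated hab hf he
    (fun i => (heE i).1) (by positivity) hsep fun i => (heE i).2
  exact le_mul_rpow_of_le_div_pow hk hA hζ.le hpos ((hder ξ hξ).trans hξle)
end

section
/- Let W be an s × s real invertible matrix with all entries bounded in absolute value by M. Then for any vector v ∈ ℝ^s, max_{1 ≤ p ≤ s} |(W v)(p)| ≥ s^{-3/2} · |det W| · ‖v‖₂ / sup_{p,q} |W_{p,q}|, where W_{p,q} denotes the (p,q) cofactor of W. Moreover sup_{p,q} |W_{p,q}| ≤ (s-1)^{s-1} M^{s-1}. -/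
/-!
Cramer's rule `det W • v = adj W *ᵥ (W *ᵥ v)` bounds every coordinate of `|det W| • v` by
`s · sup |adj W| · max_p |(W v) p|`, and passing from the sup norm to the Euclidean norm costs
another factor `√s`. Each cofactor is a minor of order `s - 1`, so the permutation-expansion
bound `(s - 1)! M^(s-1)` together with `(s - 1)! ≤ (s - 1)^(s-1)` bounds it.
-/

open Matrix Finset

theorem Real.sqrt_sum_sq_le {n : Type*} [Fintype n] (v : n → ℝ) {m : ℝ} (hm : 0 ≤ m)
    (h : ∀ i, |v i| ≤ m) : √(∑ i, v i ^ 2) ≤ √(Fintype.card n) * m := by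
  have hsum : ∑ i, v i ^ 2 ≤ Fintype.card n * m ^ 2 := by
    simpa using sum_le_card_nsmul univ (fun i => v i ^ 2) (m ^ 2)
      fun i _ => sq_le_sq' (abs_le.mp (h i)).1 (abs_le.mp (h i)).2
  calc √(∑ i, v i ^ 2) ≤ √(Fintype.card n * m ^ 2) := Real.sqrt_le_sqrt hsum
    _ = √(Fintype.card n) * m := by rw [Real.sqrt_mul (Nat.cast_nonneg _), Real.sqrt_sq hm]

theorem Real.rpow_neg_three_halves_mul_div_le {s x A y : ℝ} (hs : 0 < s) (hA : 0 ≤ A)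
    (hy : 0 ≤ y) (h : x ≤ s * √s * (A * y)) : s ^ (-(3 : ℝ) / 2) * x / A ≤ y := by
  rcases hA.eq_or_lt with rfl | hA
  · simpa using hy
  have hpow : s ^ (-(3 : ℝ) / 2) = (s * √s)⁻¹ := by
    rw [neg_div, Real.rpow_neg hs.le, show (3 : ℝ) / 2 = 1 + 1 / 2 by norm_num,
      Real.rpow_add hs, Real.rpow_one, Real.sqrt_eq_rpow]
  rw [hpow, div_le_iff₀ hA, inv_mul_le_iff₀ (by positivity)]
  linarith

namespace Matrix

variable {n : Type*} [Fintype n] [DecidableEq n]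

theorem det_smul_eq_adjugate_mulVec_mulVec {R : Type*} [CommRing R] (W : Matrix n n R)
    (v : n → R) : W.det • v = W.adjugate *ᵥ (W *ᵥ v) := by
  rw [mulVec_mulVec, adjugate_mul, smul_mulVec, one_mulVec]

theorem abs_det_mul_abs_le (W : Matrix n n ℝ) (v : n → ℝ) {A c : ℝ}
    (hA : ∀ i j, |W.adjugate i j| ≤ A) (hc : ∀ j, |(W *ᵥ v) j| ≤ c) (i : n) :
    |W.det| * |v i| ≤ Fintype.card n * (A * c) := by
  have hA₀ : 0 ≤ A := (abs_nonneg _).trans (hA i i)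
  calc |W.det| * |v i| = |∑ j, W.adjugate i j * (W *ᵥ v) j| := by
        rw [← abs_mul, ← smul_eq_mul, ← Pi.smul_apply, det_smul_eq_adjugate_mulVec_mulVec]
        rfl
    _ ≤ ∑ j, |W.adjugate i j| * |(W *ᵥ v) j| := by
        simpa only [abs_mul] using abs_sum_le_sum_abs (fun j => W.adjugate i j * (W *ᵥ v) j) univ
    _ ≤ ∑ _j : n, A * c := sum_le_sum fun j _ => mul_le_mul (hA i j) (hc j) (abs_nonneg _) hA₀
    _ = Fintype.card n * (A * c) := by simp

theorem abs_det_mul_sqrt_sum_sq_le [Nonempty n] (W : Matrix n n ℝ) (v : n → ℝ) {A c : ℝ}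
    (hA : ∀ i j, |W.adjugate i j| ≤ A) (hc : ∀ j, |(W *ᵥ v) j| ≤ c) :
    |W.det| * √(∑ i, v i ^ 2) ≤ Fintype.card n * √(Fintype.card n) * (A * c) := by
  obtain ⟨i⟩ := ‹Nonempty n›
  have hA₀ : 0 ≤ A := (abs_nonneg _).trans (hA i i)
  have hc₀ : 0 ≤ c := (abs_nonneg _).trans (hc i)
  calc |W.det| * √(∑ i, v i ^ 2) = √(∑ i, (W.det * v i) ^ 2) := by
        simp_rw [← Real.sqrt_sq_eq_abs, ← Real.sqrt_mul (sq_nonneg _), mul_sum, mul_pow]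
    _ ≤ √(Fintype.card n) * (Fintype.card n * (A * c)) :=
        Real.sqrt_sum_sq_le _ (by positivity) fun i => by
          simpa only [abs_mul] using abs_det_mul_abs_le W v hA hc i
    _ = Fintype.card n * √(Fintype.card n) * (A * c) := by ring

theorem abs_adjugate_le_pow {k : ℕ} (W : Matrix (Fin (k + 1)) (Fin (k + 1)) ℝ) {M : ℝ}
    (hM : ∀ p q, |W p q| ≤ M) (i j : Fin (k + 1)) : |W.adjugate i j| ≤ k ^ k * M ^ k := by
  have hM₀ : 0 ≤ M := (abs_nonneg _).trans (hM 0 0)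
  rw [adjugate_fin_succ_eq_det_submatrix, abs_mul, abs_pow, abs_neg, abs_one, one_pow, one_mul]
  calc |(W.submatrix j.succAbove i.succAbove).det| ≤ k.factorial * M ^ k := by
        simpa using det_le (A := W.submatrix j.succAbove i.succAbove)
          (abv := AbsoluteValue.abs) fun p q => hM _ _
    _ ≤ k ^ k * M ^ k := by gcongr; exact_mod_cast Nat.factorial_le_pow k

end Matrix

theorem stmt1_general (s : ℕ) (hs : 1 ≤ s) (W : Matrix (Fin s) (Fin s) ℝ)
    (M : ℝ) (hM : ∀ p q, |W p q| ≤ M) (v : Fin s → ℝ) :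
    (∃ p : Fin s,
      (s : ℝ) ^ (-(3 : ℝ) / 2) * (|W.det| * Real.sqrt (∑ i, v i ^ 2)) /
        (⨆ p' : Fin s, ⨆ q' : Fin s, |W.adjugate q' p'|) ≤ |W.mulVec v p|) ∧
    ∀ p q : Fin s, |W.adjugate q p| ≤ ((s : ℝ) - 1) ^ (s - 1) * M ^ (s - 1) := by
  obtain ⟨k, rfl⟩ : ∃ k, s = k + 1 := ⟨s - 1, by omega⟩
  set A := ⨆ p' : Fin (k + 1), ⨆ q' : Fin (k + 1), |W.adjugate q' p'|
  have hA : ∀ p q, |W.adjugate q p| ≤ A := fun p q =>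
    (le_ciSup (Finite.bddAbove_range _) q).trans
      (le_ciSup (Finite.bddAbove_range fun p' => ⨆ q', |W.adjugate q' p'|) p)
  refine ⟨?_, fun p q => by simpa using W.abs_adjugate_le_pow hM q p⟩
  obtain ⟨p, hp⟩ := Finite.exists_max fun p => |(W *ᵥ v) p|
  refine ⟨p, Real.rpow_neg_three_halves_mul_div_le (by positivity)
    ((abs_nonneg _).trans (hA 0 0)) (abs_nonneg _) ?_⟩
  simpa using W.abs_det_mul_sqrt_sum_sq_le v (fun i j => hA j i) hp

/-- Cramer/Hadamard estimate: for an invertible real `s × s` matrix `W` with entries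
bounded by `M`, `max_p |(W v)(p)| ≥ s^{-3/2} |det W| ‖v‖₂ / sup_{p,q} |W_{p,q}|`,
where `W_{p,q}` is the `(p,q)` cofactor (i.e. `adjugate W q p`); moreover
`sup_{p,q} |W_{p,q}| ≤ (s-1)^{s-1} M^{s-1}`. -/
theorem stmt1 (s : ℕ) (hs : 1 ≤ s) (W : Matrix (Fin s) (Fin s) ℝ)
    (hW : IsUnit W.det) (M : ℝ) (hM : ∀ p q, |W p q| ≤ M) (v : Fin s → ℝ) :
    (∃ p : Fin s,
      (s : ℝ) ^ (-(3 : ℝ) / 2) * (|W.det| * Real.sqrt (∑ i, v i ^ 2)) /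
        (⨆ p' : Fin s, ⨆ q' : Fin s, |W.adjugate q' p'|) ≤ |W.mulVec v p|) ∧
    ∀ p q : Fin s, |W.adjugate q p| ≤ ((s : ℝ) - 1) ^ (s - 1) * M ^ (s - 1) :=
  stmt1_general s hs W M hM v
end

section
/- Let θ ∈ ℝ, α ∈ ℝ^d, and let j₁,…,j_s ∈ ℤ^d be lattice sites such that all the values tan π(θ + ½ + j_q·α), q = 1,…,s, are finite. Define the s×s matrix W with W(p,q) = g^{(p)}(θ + ½ + j_q·α), where g(x) = tan(πx). Then det W = C(s) · ∏_{q=1}^s cos^{-2}(π(θ + ½ + j_q·α)) · ∏_{1 ≤ p < q ≤ s} (cot π(θ + j_q·α) − cot π(θ + j_p·α)) for some nonzero constant C(s) depending only on s. -/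
/-!
With `t = tan(πx)` one has `g⁽ⁿ⁺¹⁾(x) = πⁿ⁺¹ (1 + t²) Qₙ(t)`, where `Qₙ` is a polynomial of
degree `n` with leading coefficient `(n+1)!`. Pulling the factors `1 + t_q² = cos⁻²` out of the
columns and `πᵖ⁺¹` out of the rows leaves `det (Q_p(t_q))`, which reduces to the Vandermonde
determinant `∏_{p<q} (t_q - t_p)` by row operations; finally `t_q = -cot π(θ + j_q·α)`.
-/

open Real Finset Polynomial Nat Topology

theorem Matrix.det_eval_eq_prod_leadingCoeff_mul_prod_sub {K : Type*} [Field K] {n : ℕ}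
    (v : Fin n → K) (p : Fin n → K[X]) (h_deg : ∀ i, (p i).natDegree = i)
    (hp : ∀ i, p i ≠ 0) :
    (Matrix.of fun i j => (p i).eval (v j)).det
      = (∏ i, (p i).leadingCoeff) * ∏ i, ∏ j ∈ Ioi i, (v j - v i) := by
  have hlc (i : Fin n) : (p i).leadingCoeff ≠ 0 := leadingCoeff_ne_zero.mpr (hp i)
  set m : Fin n → K[X] := fun i => C (p i).leadingCoeff⁻¹ * p i
  have hm_monic (i : Fin n) : (m i).Monic :=
    monic_C_mul_of_mul_leadingCoeff_eq_one (inv_mul_cancel₀ (hlc i))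
  have hm_deg (i : Fin n) : (m i).natDegree = i := by
    rw [natDegree_C_mul (inv_ne_zero (hlc i)), h_deg]
  have hpm (i : Fin n) (x : K) : (p i).eval x = (p i).leadingCoeff * (m i).eval x := by
    simp [m, hlc i]
  have hscale := Matrix.det_mul_column (fun i => (p i).leadingCoeff)
    (Matrix.of fun i j => (m i).eval (v j))
  simp only [Matrix.of_apply] at hscale
  simp only [hpm, hscale]
  congr 1
  rw [← Matrix.det_vandermonde,
    Matrix.det_eval_matrixOfPolynomials_eq_det_vandermonde v m hm_deg hm_monic]
  exact Matrix.det_transpose _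

/-- `tanDerivPoly n` is the polynomial `Q` with `tan⁽ⁿ⁺¹⁾ = (1 + tan²) · Q(tan)`. -/
noncomputable def tanDerivPoly : ℕ → ℝ[X]
  | 0 => 1
  | n + 1 => C 2 * X * tanDerivPoly n + (1 + X ^ 2) * derivative (tanDerivPoly n)

lemma tanDerivPoly_natDegree_le_and_coeff (n : ℕ) :
    (tanDerivPoly n).natDegree ≤ n ∧ (tanDerivPoly n).coeff n = (n + 1)! := by
  induction n with
  | zero => simp [tanDerivPoly]
  | succ n ih =>
    obtain ⟨hdeg, hcoeff⟩ := ih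
    set Q := tanDerivPoly n
    have hQ' : (X ^ 2 * derivative Q).natDegree ≤ n + 1 := by
      rcases Nat.eq_zero_or_pos Q.natDegree with h0 | hpos
      · rw [eq_C_of_natDegree_eq_zero h0, derivative_C, mul_zero, natDegree_zero]
        exact Nat.zero_le _
      · refine natDegree_mul_le.trans ?_
        have := natDegree_derivative_le Q
        rw [natDegree_X_pow]
        omega
    have hQ'_coeff : (X ^ 2 * derivative Q).coeff (n + 1) = n * Q.coeff n := by
      rcases n with _ | m
      · simp [coeff_X_pow_mul']
      · rw [show m + 1 + 1 = m + 2 from rfl, coeff_X_pow_mul', coeff_derivative]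
        simp [mul_comm]
    have hrec : tanDerivPoly (n + 1) = C 2 * X * Q + derivative Q + X ^ 2 * derivative Q := by
      simp only [tanDerivPoly, Q]; ring
    rw [hrec]
    constructor
    · refine natDegree_add_le_of_degree_le (natDegree_add_le_of_degree_le ?_ ?_) hQ'
      · have := natDegree_mul_le_of_le (natDegree_C_mul_X (2 : ℝ) two_ne_zero).le hdeg
        omega
      · have := natDegree_derivative_le Q
        omega
    · have hQ_succ : Q.coeff (n + 2) = 0 := coeff_eq_zero_of_natDegree_lt (by omega)
      rw [coeff_add, coeff_add, hQ'_coeff, mul_assoc, coeff_C_mul, coeff_X_mul, coeff_derivative,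
        hQ_succ, hcoeff, factorial_succ (n + 1)]
      push_cast
      ring

lemma tanDerivPoly_natDegree (n : ℕ) : (tanDerivPoly n).natDegree = n := by
  obtain ⟨hle, hcoeff⟩ := tanDerivPoly_natDegree_le_and_coeff n
  exact le_antisymm hle (le_natDegree_of_ne_zero (by rw [hcoeff]; positivity))

lemma tanDerivPoly_leadingCoeff (n : ℕ) : (tanDerivPoly n).leadingCoeff = (n + 1)! := by
  rw [leadingCoeff, tanDerivPoly_natDegree, (tanDerivPoly_natDegree_le_and_coeff n).2]

lemma derivative_one_add_X_sq_mul_tanDerivPoly (n : ℕ) :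
    derivative ((1 + X ^ 2) * tanDerivPoly n) = tanDerivPoly (n + 1) := by
  simp only [tanDerivPoly, derivative_mul, derivative_add, derivative_one, derivative_X_pow]
  push_cast
  ring

lemma hasDerivAt_tan_pi_mul {x : ℝ} (hx : cos (π * x) ≠ 0) :
    HasDerivAt (fun y => tan (π * y)) (π * (1 + tan (π * x) ^ 2)) x := by
  refine ((hasDerivAt_tan hx).comp x ((hasDerivAt_id x).const_mul π)).congr_deriv ?_
  rw [one_div, ← inv_one_add_tan_sq hx, inv_inv, mul_one, mul_comm]

lemma iteratedDeriv_succ_tan_pi_mul (n : ℕ) {x : ℝ} (hx : cos (π * x) ≠ 0) :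
    iteratedDeriv (n + 1) (fun y => tan (π * y)) x
      = π ^ (n + 1) * ((1 + X ^ 2) * tanDerivPoly n).eval (tan (π * x)) := by
  induction n generalizing x with
  | zero =>
    rw [iteratedDeriv_one, (hasDerivAt_tan_pi_mul hx).deriv]
    simp [tanDerivPoly]
  | succ n ih =>
    have hnhds : ∀ᶠ y in 𝓝 x, cos (π * y) ≠ 0 :=
      (continuous_cos.comp (continuous_const.mul continuous_id)).continuousAt.eventually_ne hx
    have hev : iteratedDeriv (n + 1) (fun y => tan (π * y)) =ᶠ[𝓝 x]
        fun y => π ^ (n + 1) * ((1 + X ^ 2) * tanDerivPoly n).eval (tan (π * y)) := by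
      filter_upwards [hnhds] with y hy using ih hy
    have hderiv :
        HasDerivAt (fun y => π ^ (n + 1) * ((1 + X ^ 2) * tanDerivPoly n).eval (tan (π * y)))
        (π ^ (n + 1) * ((derivative ((1 + X ^ 2) * tanDerivPoly n)).eval (tan (π * x))
          * (π * (1 + tan (π * x) ^ 2)))) x :=
      ((((1 + X ^ 2) * tanDerivPoly n).hasDerivAt _).comp x (hasDerivAt_tan_pi_mul hx)).const_mul _
    rw [iteratedDeriv_succ, hev.deriv_eq, hderiv.deriv, derivative_one_add_X_sq_mul_tanDerivPoly]
    simp only [eval_mul, eval_add, eval_one, eval_pow, eval_X]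
    ring

theorem det_iteratedDeriv_tan_pi_mul {s : ℕ} (x : Fin s → ℝ) (hx : ∀ q, cos (π * x q) ≠ 0) :
    (Matrix.of fun p q : Fin s => iteratedDeriv (p + 1) (fun y => tan (π * y)) (x q)).det
      = (∏ p : Fin s, π ^ (p.val + 1) * (p.val + 1)!) * (∏ q, (1 + tan (π * x q) ^ 2)) *
        ∏ p, ∏ q ∈ Ioi p, (tan (π * x q) - tan (π * x p)) := by
  set P : Fin s → ℝ[X] := fun p => C (π ^ (p.val + 1)) * tanDerivPoly p
  have hπ (p : Fin s) : π ^ (p.val + 1) ≠ 0 := pow_ne_zero _ pi_ne_zero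
  have hP_deg (p : Fin s) : (P p).natDegree = p := by
    rw [natDegree_C_mul (hπ p), tanDerivPoly_natDegree]
  have hP_lc (p : Fin s) : (P p).leadingCoeff = π ^ (p.val + 1) * (p.val + 1)! := by
    rw [leadingCoeff_mul, leadingCoeff_C, tanDerivPoly_leadingCoeff]
  have hP_ne (p : Fin s) : P p ≠ 0 := by
    rw [← leadingCoeff_ne_zero, hP_lc]
    positivity
  have hentry (p q : Fin s) : iteratedDeriv (p + 1) (fun y => tan (π * y)) (x q)
      = (1 + tan (π * x q) ^ 2) * (P p).eval (tan (π * x q)) := by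
    rw [iteratedDeriv_succ_tan_pi_mul _ (hx q)]
    simp only [P, eval_mul, eval_C, eval_add, eval_one, eval_pow, eval_X]
    ring
  have hcols := Matrix.det_mul_row (fun q => 1 + tan (π * x q) ^ 2)
    (Matrix.of fun p q => (P p).eval (tan (π * x q)))
  simp only [Matrix.of_apply] at hcols
  simp only [hentry, hcols, Matrix.det_eval_eq_prod_leadingCoeff_mul_prod_sub _ P hP_deg hP_ne,
    hP_lc]
  ring

lemma tan_pi_mul_add_half (y : ℝ) : tan (π * (y + 1 / 2)) = -(cos (π * y) / sin (π * y)) := by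
  rw [mul_add, mul_one_div, tan_eq_sin_div_cos, sin_add_pi_div_two, cos_add_pi_div_two, div_neg]

theorem stmt3_general (d s : ℕ) :
    ∃ C : ℝ, C ≠ 0 ∧
      ∀ (θ : ℝ) (α : Fin d → ℝ) (j : Fin s → Fin d → ℤ),
        (∀ q, Real.cos (π * (θ + 1 / 2 + ∑ k, (j q k : ℝ) * α k)) ≠ 0) →
        (Matrix.of fun p q : Fin s =>
            iteratedDeriv (p.val + 1) (fun x => Real.tan (π * x))
              (θ + 1 / 2 + ∑ k, (j q k : ℝ) * α k)).det
          = C * (∏ q : Fin s, (Real.cos (π * (θ + 1 / 2 + ∑ k, (j q k : ℝ) * α k)))⁻¹ ^ 2) *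
            ∏ p : Fin s, ∏ q ∈ Finset.univ.filter (fun q : Fin s => p < q),
              (Real.cos (π * (θ + ∑ k, (j q k : ℝ) * α k)) /
                 Real.sin (π * (θ + ∑ k, (j q k : ℝ) * α k)) -
               Real.cos (π * (θ + ∑ k, (j p k : ℝ) * α k)) /
                 Real.sin (π * (θ + ∑ k, (j p k : ℝ) * α k))) := by
  refine ⟨(∏ p : Fin s, ∏ _q ∈ Ioi p, (-1 : ℝ)) * ∏ p : Fin s, π ^ (p.val + 1) * (p.val + 1)!,
    mul_ne_zero (prod_ne_zero_iff.2 fun _ _ => prod_ne_zero_iff.2 fun _ _ => by norm_num)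
      (prod_ne_zero_iff.2 fun _ _ => by positivity), fun θ α j hcos => ?_⟩
  set z : Fin s → ℝ := fun q => θ + ∑ k, (j q k : ℝ) * α k
  have hshift (q : Fin s) : θ + 1 / 2 + ∑ k, (j q k : ℝ) * α k = z q + 1 / 2 := by
    simp only [z]; ring
  simp only [hshift, filter_lt_eq_Ioi] at hcos ⊢
  have hsec (q : Fin s) : 1 + tan (π * (z q + 1 / 2)) ^ 2 = (cos (π * (z q + 1 / 2)))⁻¹ ^ 2 := by
    rw [inv_pow, ← inv_one_add_tan_sq (hcos q), inv_inv]
  have hcot (p q : Fin s) : tan (π * (z q + 1 / 2)) - tan (π * (z p + 1 / 2))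
      = -1 * (cos (π * z q) / sin (π * z q) - cos (π * z p) / sin (π * z p)) := by
    rw [tan_pi_mul_add_half, tan_pi_mul_add_half]
    ring
  rw [det_iteratedDeriv_tan_pi_mul _ hcos]
  simp only [hsec, hcot, prod_mul_distrib]
  ring

/-- Vandermonde-type determinant identity: with `g(x) = tan(πx)` and
`W(p,q) = g^{(p)}(θ + 1/2 + j_q·α)`, one has
`det W = C(s) ∏_q cos⁻²(π(θ + 1/2 + j_q·α)) ∏_{p<q} (cot π(θ + j_q·α) − cot π(θ + j_p·α))`
for a nonzero constant `C(s)` depending only on `s` (here `cot = cos / sin`). -/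
theorem stmt3 (d s : ℕ) (hs : 1 ≤ s) :
    ∃ C : ℝ, C ≠ 0 ∧
      ∀ (θ : ℝ) (α : Fin d → ℝ) (j : Fin s → Fin d → ℤ),
        (∀ q, Real.cos (π * (θ + 1 / 2 + ∑ k, (j q k : ℝ) * α k)) ≠ 0) →
        (Matrix.of fun p q : Fin s =>
            iteratedDeriv (p.val + 1) (fun x => Real.tan (π * x))
              (θ + 1 / 2 + ∑ k, (j q k : ℝ) * α k)).det
          = C * (∏ q : Fin s, (Real.cos (π * (θ + 1 / 2 + ∑ k, (j q k : ℝ) * α k)))⁻¹ ^ 2) *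
            ∏ p : Fin s, ∏ q ∈ Finset.univ.filter (fun q : Fin s => p < q),
              (Real.cos (π * (θ + ∑ k, (j q k : ℝ) * α k)) /
                 Real.sin (π * (θ + ∑ k, (j q k : ℝ) * α k)) -
               Real.cos (π * (θ + ∑ k, (j p k : ℝ) * α k)) /
                 Real.sin (π * (θ + ∑ k, (j p k : ℝ) * α k))) :=
  stmt3_general d s
end

section
/- Let S ⊂ ℤ^{b+d} be a finite set, and let A, B be matrices indexed by {±} × S with entries satisfying |B_{r,r'}(m,m')| ≤ ε₂(|m−m'|+1)^C e^{−c‖m−m'‖}, |(A^{-1})_{r,r'}(m,m')| ≤ ε₁^{-1} e^{−c‖m−m'‖}, and ‖A^{-1}‖ ≤ ε₁^{-1} (ℓ² operator norm), where ε₁, ε₂, c > 0, C > 1 and ‖(n,j)‖ = |n| + |j|. If 4|S|²(diam S + 1)^C ε₂ ε₁^{-1} ≤ 1/2, then ‖(A+B)^{-1}‖ ≤ 2ε₁^{-1} and |(A+B)^{-1}_{r,r'}(m,m') − (A^{-1})_{r,r'}(m,m')| ≤ ε₁^{-1} e^{−c‖m−m'‖} for all r, r' ∈ {±} and m, m' ∈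 S. -/
open Matrix

/-- Sup norm of an integer vector. -/
def supNormZ {b : ℕ} (n : Fin b → ℤ) : ℕ := Finset.univ.sup fun k => (n k).natAbs

/-- `‖(n,j) − (n',j')‖ = |n − n'| + |j − j'|` with sup norms on each factor. -/
def pairDist {b d : ℕ} (m m' : (Fin b → ℤ) × (Fin d → ℤ)) : ℝ :=
  ((supNormZ (m.1 - m'.1) + supNormZ (m.2 - m'.2) : ℕ) : ℝ)

/-- Diameter of a finite set `S ⊂ ℤ^b × ℤ^d` with respect to `pairDist`. -/
def finsetDiam {b d : ℕ} (S : Finset ((Fin b → ℤ) × (Fin d → ℤ))) : ℝ :=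
  (((S ×ˢ S).sup fun p => supNormZ (p.1.1 - p.2.1) + supNormZ (p.1.2 - p.2.2) : ℕ) : ℝ)

/-! The weight `g(m, m') = e^{-c‖m - m'‖}` is submultiplicative by the triangle inequality, so the
entries of a product of two `g`-decaying matrices of size `n = 2|S|` are again `g`-decaying, with
the constants multiplied and scaled by `n`. Hence `M = A⁻¹ B` satisfies `|M| ≤ δ g` with
`n δ ≤ 1/2` (the smallness assumption), Schur's test gives `‖M‖ ≤ 1/2`, and `A + B = A (1 + M)`
is invertible. Instead of summing the Neumann series, both bounds are read off the fixed-point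
equation `X = A⁻¹ - M X` for `X = (A + B)⁻¹`: in operator norm it gives
`‖X‖ ≤ ‖A⁻¹‖ / (1 - ‖M‖)`, and for `D = X - A⁻¹ = -M A⁻¹ - M D`, evaluating the equation at the
entry where `|D| / g` is largest gives `|D| ≤ n δ ε₁⁻¹ / (1 - n δ) · g ≤ ε₁⁻¹ g`. -/

lemma supNormZ_sub_le_add {b : ℕ} (x y z : Fin b → ℤ) :
    supNormZ (x - z) ≤ supNormZ (x - y) + supNormZ (y - z) :=
  Finset.sup_le fun k hk =>
    calc ((x - z) k).natAbs = ((x - y) k + (y - z) k).natAbs := by simp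
      _ ≤ ((x - y) k).natAbs + ((y - z) k).natAbs := Int.natAbs_add_le _ _
      _ ≤ supNormZ (x - y) + supNormZ (y - z) :=
        add_le_add (Finset.le_sup (f := fun k => ((x - y) k).natAbs) hk)
          (Finset.le_sup (f := fun k => ((y - z) k).natAbs) hk)

section PairDist

variable {b d : ℕ}

lemma pairDist_triangle (x y z : (Fin b → ℤ) × (Fin d → ℤ)) :
    pairDist x z ≤ pairDist x y + pairDist y z := by
  have h₁ := supNormZ_sub_le_add x.1 y.1 z.1
  have h₂ := supNormZ_sub_le_add x.2 y.2 z.2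
  unfold pairDist
  exact_mod_cast (by omega)

lemma pairDist_le_finsetDiam {S : Finset ((Fin b → ℤ) × (Fin d → ℤ))}
    {m m' : (Fin b → ℤ) × (Fin d → ℤ)} (hm : m ∈ S) (hm' : m' ∈ S) :
    pairDist m m' ≤ finsetDiam S :=
  Nat.cast_le.mpr <| Finset.le_sup
    (f := fun p => supNormZ (p.1.1 - p.2.1) + supNormZ (p.1.2 - p.2.2))
    (Finset.mk_mem_product hm hm')

lemma exp_neg_mul_pairDist_le_one {c : ℝ} (hc : 0 ≤ c) (x y : (Fin b → ℤ) × (Fin d → ℤ)) :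
    Real.exp (-c * pairDist x y) ≤ 1 :=
  Real.exp_le_one_iff.mpr <| by
    have : 0 ≤ c * pairDist x y := mul_nonneg hc (Nat.cast_nonneg _)
    linarith

lemma exp_neg_mul_pairDist_mul_le {c : ℝ} (hc : 0 ≤ c) (x y z : (Fin b → ℤ) × (Fin d → ℤ)) :
    Real.exp (-c * pairDist x y) * Real.exp (-c * pairDist y z) ≤
      Real.exp (-c * pairDist x z) := by
  rw [← Real.exp_add, Real.exp_le_exp]
  nlinarith [pairDist_triangle x y z]

lemma pairDist_add_one_rpow_le_finsetDiam {S : Finset ((Fin b → ℤ) × (Fin d → ℤ))}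
    {m m' : (Fin b → ℤ) × (Fin d → ℤ)} (hm : m ∈ S) (hm' : m' ∈ S) {C : ℝ} (hC : 0 ≤ C) :
    (pairDist m m' + 1) ^ C ≤ (finsetDiam S + 1) ^ C :=
  Real.rpow_le_rpow (add_nonneg (Nat.cast_nonneg _) zero_le_one)
    (by linarith [pairDist_le_finsetDiam hm hm']) hC

end PairDist

lemma norm_le_div_of_eq_sub_mul {R : Type*} [SeminormedRing R] {x p m : R}
    (hx : x = p - m * x) (hm : ‖m‖ < 1) : ‖x‖ ≤ ‖p‖ / (1 - ‖m‖) := by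
  have hx' : ‖x‖ ≤ ‖p‖ + ‖m‖ * ‖x‖ :=
    calc ‖x‖ = ‖p - m * x‖ := congrArg norm hx
      _ ≤ ‖p‖ + ‖m * x‖ := norm_sub_le _ _
      _ ≤ ‖p‖ + ‖m‖ * ‖x‖ := by gcongr; exact norm_mul_le _ _
  rw [le_div_iff₀ (by linarith)]
  linarith

lemma inv_add_eq_inv_sub_inv_mul_mul {R : Type*} [CommRing R] {ι : Type*} [Fintype ι]
    [DecidableEq ι] {A B : Matrix ι ι R} (hA : IsUnit A.det) (hAB : IsUnit (A + B).det) :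
    (A + B)⁻¹ = A⁻¹ - A⁻¹ * B * (A + B)⁻¹ := by
  have h : A⁻¹ * (A + B) = 1 + A⁻¹ * B := by rw [mul_add, nonsing_inv_mul A hA]
  rw [eq_sub_iff_add_eq, ← one_add_mul, ← h, Matrix.mul_assoc, mul_nonsing_inv _ hAB,
    Matrix.mul_one]

open scoped Matrix.Norms.L2Operator

section DecayingMatrices

variable {ι : Type*} [Fintype ι]

lemma l2_opNorm_le_card_mul_of_abs_apply_le [DecidableEq ι] {P : Matrix ι ι ℝ} {β : ℝ}
    (hβ : 0 ≤ β) (hP : ∀ i j, |P i j| ≤ β) : ‖P‖ ≤ Fintype.card ι * β := by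
  rw [← l2_opNorm_toEuclideanCLM]
  refine ContinuousLinearMap.opNorm_le_bound _ (by positivity) fun x => ?_
  refine (sq_le_sq₀ (by positivity) (by positivity)).mp ?_
  have hrow : ∀ i, (∑ j, P i j * x j) ^ 2 ≤ Fintype.card ι * β ^ 2 * ‖x‖ ^ 2 := fun i =>
    calc (∑ j, P i j * x j) ^ 2 ≤ (∑ j, P i j ^ 2) * ∑ j, x j ^ 2 :=
          Finset.sum_mul_sq_le_sq_mul_sq _ _ _
      _ ≤ (∑ _j : ι, β ^ 2) * ‖x‖ ^ 2 := by
          rw [EuclideanSpace.norm_sq_eq]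
          simp only [Real.norm_eq_abs, sq_abs]
          refine mul_le_mul_of_nonneg_right (Finset.sum_le_sum fun j _ => ?_) (by positivity)
          exact sq_le_sq' (abs_le.mp (hP i j)).1 (abs_le.mp (hP i j)).2
      _ = Fintype.card ι * β ^ 2 * ‖x‖ ^ 2 := by simp
  calc ‖toEuclideanCLM (𝕜 := ℝ) P x‖ ^ 2 = ∑ i, (∑ j, P i j * x j) ^ 2 := by
        simp [EuclideanSpace.norm_sq_eq, mulVec, dotProduct]
    _ ≤ ∑ _i : ι, (Fintype.card ι * β ^ 2 * ‖x‖ ^ 2 : ℝ) := Finset.sum_le_sum fun i _ => hrow i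
    _ = (Fintype.card ι * β * ‖x‖) ^ 2 := by simp; ring

lemma isUnit_det_add_of_norm_inv_mul_lt_one {𝕜 : Type*} [RCLike 𝕜] [DecidableEq ι]
    {A B : Matrix ι ι 𝕜} (hA : IsUnit A.det) (hAB : ‖A⁻¹ * B‖ < 1) : IsUnit (A + B).det := by
  have h1 : IsUnit (1 + A⁻¹ * B) := by
    simpa using isUnit_one_sub_of_norm_lt_one (x := -(A⁻¹ * B)) (by rwa [norm_neg])
  have h2 : A + B = A * (1 + A⁻¹ * B) := by
    rw [mul_add, mul_one, ← Matrix.mul_assoc, mul_nonsing_inv A hA, Matrix.one_mul]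
  rw [h2, det_mul]
  exact hA.mul ((isUnit_iff_isUnit_det _).mp h1)

section Kernel

variable {g : ι → ι → ℝ}

lemma abs_mul_apply_le (hg0 : ∀ x z, 0 ≤ g x z) (hg : ∀ x y z, g x y * g y z ≤ g x z)
    {P Q : Matrix ι ι ℝ} {p q : ℝ} (hp : 0 ≤ p) (hq : 0 ≤ q)
    (hP : ∀ x z, |P x z| ≤ p * g x z) (hQ : ∀ x z, |Q x z| ≤ q * g x z) (x z : ι) :
    |(P * Q) x z| ≤ Fintype.card ι * (p * q) * g x z :=
  calc |(P * Q) x z| ≤ ∑ y, |P x y| * |Q y z| := by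
        simpa only [mul_apply, abs_mul] using
          Finset.abs_sum_le_sum_abs (fun y => P x y * Q y z) Finset.univ
    _ ≤ ∑ _y : ι, p * q * g x z := Finset.sum_le_sum fun y _ =>
        calc |P x y| * |Q y z| ≤ (p * g x y) * (q * g y z) :=
              mul_le_mul (hP x y) (hQ y z) (abs_nonneg _) (mul_nonneg hp (hg0 x y))
          _ = p * q * (g x y * g y z) := by ring
          _ ≤ p * q * g x z := by gcongr; exact hg x y z
    _ = Fintype.card ι * (p * q) * g x z := by simp; ring

lemma abs_apply_le_of_eq_sub_mul (hg0 : ∀ x z, 0 < g x z) (hg : ∀ x y z, g x y * g y z ≤ g x z)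
    {X P M : Matrix ι ι ℝ} {p δ : ℝ} (hX : X = P - M * X) (hδ : 0 ≤ δ)
    (hP : ∀ x z, |P x z| ≤ p * g x z) (hM : ∀ x z, |M x z| ≤ δ * g x z)
    (hnδ : Fintype.card ι * δ < 1) (x z : ι) :
    |X x z| ≤ p / (1 - Fintype.card ι * δ) * g x z := by
  have : Nonempty ι := ⟨x⟩
  obtain ⟨⟨x₀, z₀⟩, hmax⟩ := Finite.exists_max fun xz : ι × ι => |X xz.1 xz.2| / g xz.1 xz.2
  set w := |X x₀ z₀| / g x₀ z₀
  have hXw : ∀ x z, |X x z| ≤ w * g x z := fun x z =>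
    (div_le_iff₀ (hg0 x z)).mp (hmax (x, z))
  have hw0 : 0 ≤ w := div_nonneg (abs_nonneg _) (hg0 x₀ z₀).le
  have hXw₀ : |X x₀ z₀| ≤ (p + Fintype.card ι * δ * w) * g x₀ z₀ :=
    calc |X x₀ z₀| = |P x₀ z₀ - (M * X) x₀ z₀| := by rw [← Matrix.sub_apply, ← hX]
      _ ≤ |P x₀ z₀| + |(M * X) x₀ z₀| := abs_sub _ _
      _ ≤ p * g x₀ z₀ + Fintype.card ι * (δ * w) * g x₀ z₀ := by
          gcongr
          · exact hP x₀ z₀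
          · exact abs_mul_apply_le (fun x z => (hg0 x z).le) hg hδ hw0 hM hXw x₀ z₀
      _ = (p + Fintype.card ι * δ * w) * g x₀ z₀ := by ring
  have hw : w ≤ p / (1 - Fintype.card ι * δ) := by
    rw [le_div_iff₀ (by linarith)]
    have := (div_le_iff₀ (hg0 x₀ z₀)).mpr hXw₀
    linarith
  exact (hXw x z).trans (by gcongr; exact (hg0 x z).le)

theorem inv_add_perturbation_bounds [DecidableEq ι] (hg0 : ∀ x z, 0 < g x z)
    (hg : ∀ x y z, g x y * g y z ≤ g x z) (hg1 : ∀ x z, g x z ≤ 1)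
    {A B : Matrix ι ι ℝ} {a K : ℝ} (ha : 0 ≤ a) (hK : 0 ≤ K) (hA : IsUnit A.det)
    (hAg : ∀ x z, |A⁻¹ x z| ≤ a * g x z) (hAop : ‖A⁻¹‖ ≤ a)
    (hBg : ∀ x z, |B x z| ≤ K * g x z) (hsmall : (Fintype.card ι : ℝ) ^ 2 * a * K ≤ 1 / 2) :
    IsUnit (A + B).det ∧ ‖(A + B)⁻¹‖ ≤ 2 * a ∧
      ∀ x z, |((A + B)⁻¹ - A⁻¹) x z| ≤ a * g x z := by
  set n : ℝ := (Fintype.card ι : ℝ)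
  set M := A⁻¹ * B
  set δ := n * (a * K)
  have hδ : 0 ≤ δ := by positivity
  have hnδ : n * δ ≤ 1 / 2 := by linarith [show n * δ = n ^ 2 * a * K by ring]
  have hM : ∀ x z, |M x z| ≤ δ * g x z :=
    abs_mul_apply_le (fun x z => (hg0 x z).le) hg ha hK hAg hBg
  have hMnorm : ‖M‖ ≤ 1 / 2 :=
    (l2_opNorm_le_card_mul_of_abs_apply_le hδ fun x z =>
      (hM x z).trans (mul_le_of_le_one_right hδ (hg1 x z))).trans hnδ
  have hdet := isUnit_det_add_of_norm_inv_mul_lt_one hA (hMnorm.trans_lt one_half_lt_one)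
  set X := (A + B)⁻¹
  have hX : X = A⁻¹ - M * X := inv_add_eq_inv_sub_inv_mul_mul hA hdet
  have hD : X - A⁻¹ = -(M * A⁻¹) - M * (X - A⁻¹) := by
    rw [mul_sub]; nth_rewrite 1 [hX]; abel
  have hP : ∀ x z, |(-(M * A⁻¹)) x z| ≤ n * (δ * a) * g x z := fun x z => by
    rw [Matrix.neg_apply, abs_neg]
    exact abs_mul_apply_le (fun x z => (hg0 x z).le) hg hδ ha hM hAg x z
  refine ⟨hdet, ?_, fun x z => ?_⟩
  · calc ‖X‖ ≤ ‖A⁻¹‖ / (1 - ‖M‖) := norm_le_div_of_eq_sub_mul hX (by linarith)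
      _ ≤ a / (1 / 2) := div_le_div₀ ha hAop one_half_pos (by linarith)
      _ = 2 * a := by ring
  · refine (abs_apply_le_of_eq_sub_mul hg0 hg hD hδ hP hM (by linarith) x z).trans ?_
    refine mul_le_mul_of_nonneg_right ?_ (hg0 x z).le
    rw [div_le_iff₀ (by linarith)]
    nlinarith

end Kernel

end DecayingMatrices

/-- Neumann series perturbation lemma: under the stated bounds on `B`, `A⁻¹`
and the smallness condition `4|S|²(diam S + 1)^C ε₂ ε₁⁻¹ ≤ 1/2`, the matrix
`A + B` is invertible with `‖(A+B)⁻¹‖ ≤ 2ε₁⁻¹` and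
`|(A+B)⁻¹(m,m') − A⁻¹(m,m')| ≤ ε₁⁻¹ e^{−c‖m−m'‖}`. -/
theorem stmt10 (b d : ℕ) (S : Finset ((Fin b → ℤ) × (Fin d → ℤ)))
    (A B : Matrix (Bool × S) (Bool × S) ℝ)
    (ε₁ ε₂ c C : ℝ) (hε₁ : 0 < ε₁) (hε₂ : 0 < ε₂) (hc : 0 < c) (hC : 1 < C)
    (hAdet : IsUnit A.det)
    (hB : ∀ (r r' : Bool) (m m' : S),
      |B (r, m) (r', m')| ≤
        ε₂ * (pairDist m.1 m'.1 + 1) ^ C * Real.exp (-c * pairDist m.1 m'.1))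
    (hAinv : ∀ (r r' : Bool) (m m' : S),
      |A⁻¹ (r, m) (r', m')| ≤ ε₁⁻¹ * Real.exp (-c * pairDist m.1 m'.1))
    (hAop : ‖Matrix.toEuclideanCLM (𝕜 := ℝ) A⁻¹‖ ≤ ε₁⁻¹)
    (hsmall : 4 * (S.card : ℝ) ^ 2 * (finsetDiam S + 1) ^ C * ε₂ * ε₁⁻¹ ≤ 1 / 2) :
    IsUnit (A + B).det ∧
      ‖Matrix.toEuclideanCLM (𝕜 := ℝ) (A + B)⁻¹‖ ≤ 2 * ε₁⁻¹ ∧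
      ∀ (r r' : Bool) (m m' : S),
        |(A + B)⁻¹ (r, m) (r', m') - A⁻¹ (r, m) (r', m')| ≤
          ε₁⁻¹ * Real.exp (-c * pairDist m.1 m'.1) := by
  set g : Bool × S → Bool × S → ℝ := fun x z => Real.exp (-c * pairDist x.2.1 z.2.1)
  have hBg : ∀ x z, |B x z| ≤ ε₂ * (finsetDiam S + 1) ^ C * g x z := by
    rintro ⟨r, m⟩ ⟨r', m'⟩
    refine (hB r r' m m').trans (mul_le_mul_of_nonneg_right ?_ (Real.exp_pos _).le)
    exact mul_le_mul_of_nonneg_left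
      (pairDist_add_one_rpow_le_finsetDiam m.2 m'.2 (by linarith)) hε₂.le
  have hsmall' :
      (Fintype.card (Bool × S) : ℝ) ^ 2 * ε₁⁻¹ * (ε₂ * (finsetDiam S + 1) ^ C) ≤ 1 / 2 := by
    convert hsmall using 1
    simp only [Fintype.card_prod, Fintype.card_bool, Fintype.card_coe]
    push_cast; ring
  obtain ⟨hdet, hnorm, hentry⟩ := inv_add_perturbation_bounds (g := g) (fun _ _ => Real.exp_pos _)
    (fun x y z => exp_neg_mul_pairDist_mul_le hc.le x.2.1 y.2.1 z.2.1)
    (fun x z => exp_neg_mul_pairDist_le_one hc.le x.2.1 z.2.1) (inv_nonneg.mpr hε₁.le)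
    (mul_nonneg hε₂.le (Real.rpow_nonneg (add_nonneg (Nat.cast_nonneg _) zero_le_one) _)) hAdet
    (fun x z => hAinv x.1 z.1 x.2 z.2) hAop hBg hsmall'
  exact ⟨hdet, hnorm, fun r r' m m' => hentry (r, m) (r', m')⟩
end

section
/- Let ω⁽⁰⁾ = (μ_{β₁},…,μ_{β_b}) ∈ ℝ^b with β₁,…,β_b ∈ ℤ^d distinct, and let (μ_j)_{j∈ℤ^d} be reals satisfying: (a) |μ_j − μ_{j'}| > 2δ^{1/8} for all distinct j, j' with |j|, |j'| ≤ 3N; (b) |n·ω⁽⁰⁾ + μ_j − μ_{j'}| > 2δ^{1/8} for all (n,j,j') ∈ [−2N,2N]^b × ([−3N,3N]^d)² outside {(−e_k + e_{k'}, β_k, β_{k'}) : k,k'} ∪ {(0,j,j)}. Then for any σ ∈ ℝ, the set A₁^σ = {(n,j) ∈ [−N,N]^b × [−3N,3N]^d : |σ + n·ω⁽⁰⁾ + μ_j| ≤ δ^{1/8}} has cardinality at most b. -/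
/-! Two points `(n, j)`, `(n', j')` of `A₁^σ` give `|(n - n')·ω⁽⁰⁾ + μ_j - μ_{j'}| ≤ 2δ^{1/8}`,
so by (b) the triple `(n - n', j, j')` is one of the exceptional ones. Taking `j = j'` and using
that the `β_k` are distinct shows `n = n'`, so `(n, j) ↦ j` is injective on `A₁^σ`; taking
`j ≠ j'` shows `j = β_k` for some `k`. Hence as soon as `A₁^σ` has two points it injects into
`{β₁, …, β_b}`. -/

open Finset

/-- The resonant set `A₁^σ`, with the threshold `δ^{1/8}` written `ε`. -/
def resonantSet {b d : ℕ} (N : ℕ) (ε : ℝ) (β : Fin b → Fin d → ℤ) (μ : (Fin d → ℤ) → ℝ)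
    (σ : ℝ) : Set ((Fin b → ℤ) × (Fin d → ℤ)) :=
  {p | (∀ k, |p.1 k| ≤ (N : ℤ)) ∧ (∀ k, |p.2 k| ≤ 3 * (N : ℤ)) ∧
    |σ + (∑ k, (p.1 k : ℝ) * μ (β k)) + μ p.2| ≤ ε}

namespace resonantSet

variable {b d N : ℕ} {ε σ : ℝ} {β : Fin b → Fin d → ℤ} {μ : (Fin d → ℤ) → ℝ}
  {p q : (Fin b → ℤ) × (Fin d → ℤ)}

theorem abs_fst_sub_le (hp : p ∈ resonantSet N ε β μ σ) (hq : q ∈ resonantSet N ε β μ σ)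
    (k : Fin b) : |(p.1 - q.1) k| ≤ 2 * (N : ℤ) := by
  have := abs_sub (p.1 k) (q.1 k)
  have := hp.1 k
  have := hq.1 k
  rw [Pi.sub_apply]
  linarith

theorem abs_sub_le (hp : p ∈ resonantSet N ε β μ σ) (hq : q ∈ resonantSet N ε β μ σ) :
    |(∑ k, ((p.1 - q.1) k : ℝ) * μ (β k)) + μ p.2 - μ q.2| ≤ 2 * ε := by
  have hdiff : (∑ k, ((p.1 - q.1) k : ℝ) * μ (β k)) + μ p.2 - μ q.2 =
      (σ + (∑ k, (p.1 k : ℝ) * μ (β k)) + μ p.2) - (σ + (∑ k, (q.1 k : ℝ) * μ (β k)) + μ q.2) := by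
    simp only [Pi.sub_apply, Int.cast_sub, sub_mul, sum_sub_distrib]
    ring
  rw [hdiff]
  linarith [abs_sub (σ + (∑ k, (p.1 k : ℝ) * μ (β k)) + μ p.2)
    (σ + (∑ k, (q.1 k : ℝ) * μ (β k)) + μ q.2), hp.2.2, hq.2.2]

variable
  (hsep : ∀ (n : Fin b → ℤ) (j j' : Fin d → ℤ),
    (∀ k, |n k| ≤ 2 * (N : ℤ)) →
    (∀ k, |j k| ≤ 3 * (N : ℤ)) → (∀ k, |j' k| ≤ 3 * (N : ℤ)) →
    (¬ ∃ k k' : Fin b, n = -Pi.single k 1 + Pi.single k' 1 ∧ j = β k ∧ j' = β k') →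
    ¬ (n = 0 ∧ j = j') →
    2 * ε < |(∑ k, (n k : ℝ) * μ (β k)) + μ j - μ j'|)
include hsep

theorem eq_or_exceptional (hp : p ∈ resonantSet N ε β μ σ) (hq : q ∈ resonantSet N ε β μ σ) :
    p = q ∨ ∃ k k' : Fin b,
      p.1 - q.1 = -Pi.single k 1 + Pi.single k' 1 ∧ p.2 = β k ∧ q.2 = β k' := by
  by_contra! h
  have hne : ¬ (p.1 - q.1 = 0 ∧ p.2 = q.2) := fun ⟨h1, h2⟩ => h.1 (Prod.ext (sub_eq_zero.1 h1) h2)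
  have hexc : ¬ ∃ k k' : Fin b,
      p.1 - q.1 = -Pi.single k 1 + Pi.single k' 1 ∧ p.2 = β k ∧ q.2 = β k' := by
    rintro ⟨k, k', hk⟩
    exact h.2 k k' hk.1 hk.2.1 hk.2.2
  have := hsep _ _ _ (abs_fst_sub_le hp hq) hp.2.1 hq.2.1 hexc hne
  linarith [abs_sub_le hp hq]

theorem injOn_snd (hβ : Function.Injective β) : Set.InjOn Prod.snd (resonantSet N ε β μ σ) := by
  intro p hp q hq hpq
  obtain h | ⟨k, k', hn, hk, hk'⟩ := eq_or_exceptional hsep hp hq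
  · exact h
  · obtain rfl : k = k' := hβ (hk.symm.trans (hpq.trans hk'))
    exact Prod.ext (sub_eq_zero.1 (by simpa using hn)) hpq

theorem snd_mem_range_of_ne (hp : p ∈ resonantSet N ε β μ σ)
    (hq : q ∈ resonantSet N ε β μ σ) (hpq : p ≠ q) : p.2 ∈ Set.range β := by
  obtain h | ⟨k, -, -, hk, -⟩ := eq_or_exceptional hsep hp hq
  · exact absurd h hpq
  · exact ⟨k, hk.symm⟩

theorem ncard_le (hb : 1 ≤ b) (hβ : Function.Injective β) :
    (resonantSet N ε β μ σ).ncard ≤ b := by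
  obtain hsub | hnontriv := (resonantSet N ε β μ σ).subsingleton_or_nontrivial
  · exact ((Set.ncard_le_one hsub.finite).2 hsub).trans hb
  have hmaps : ∀ p ∈ resonantSet N ε β μ σ, p.2 ∈ Set.range β := by
    intro p hp
    obtain ⟨q, hq, hqp⟩ := hnontriv.exists_ne p
    exact snd_mem_range_of_ne hsep hp hq hqp.symm
  calc (resonantSet N ε β μ σ).ncard ≤ (Set.range β).ncard :=
        Set.ncard_le_ncard_of_injOn Prod.snd hmaps (injOn_snd hsep hβ)
    _ = b := by rw [Set.ncard_range_of_injective hβ, Nat.card_eq_fintype_card, Fintype.card_fin]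

end resonantSet

theorem stmt11_general (b d N : ℕ) (hb : 1 ≤ b) (δ : ℝ)
    (β : Fin b → Fin d → ℤ) (hβ : Function.Injective β)
    (μ : (Fin d → ℤ) → ℝ)
    (hb2 : ∀ (n : Fin b → ℤ) (j j' : Fin d → ℤ),
      (∀ k, |n k| ≤ 2 * (N : ℤ)) →
      (∀ k, |j k| ≤ 3 * (N : ℤ)) → (∀ k, |j' k| ≤ 3 * (N : ℤ)) →
      (¬ ∃ k k' : Fin b, n = -Pi.single k 1 + Pi.single k' 1 ∧ j = β k ∧ j' = β k') →
      ¬ (n = 0 ∧ j = j') →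
      2 * δ ^ ((1 : ℝ) / 8) < |(∑ k, (n k : ℝ) * μ (β k)) + μ j - μ j'|)
    (σ : ℝ) :
    Set.ncard {p : (Fin b → ℤ) × (Fin d → ℤ) |
        (∀ k, |p.1 k| ≤ (N : ℤ)) ∧ (∀ k, |p.2 k| ≤ 3 * (N : ℤ)) ∧
        |σ + (∑ k, (p.1 k : ℝ) * μ (β k)) + μ p.2| ≤ δ ^ ((1 : ℝ) / 8)} ≤ b :=
  resonantSet.ncard_le (σ := σ) hb2 hb hβ

/-- Counting resonances: under the separation conditions (a) and (b) on the
eigenvalues `μ_j` and the tangential frequency `ω⁽⁰⁾ = (μ_{β₁},…,μ_{β_b})`, for any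
`σ ∈ ℝ` the set `A₁^σ = {(n,j) ∈ [−N,N]^b × [−3N,3N]^d : |σ + n·ω⁽⁰⁾ + μ_j| ≤ δ^{1/8}}`
has at most `b` elements. -/
theorem stmt11 (b d N : ℕ) (hb : 1 ≤ b) (hN : 1 ≤ N) (δ : ℝ) (hδ : 0 < δ)
    (β : Fin b → Fin d → ℤ) (hβ : Function.Injective β)
    (μ : (Fin d → ℤ) → ℝ)
    (ha : ∀ j j' : Fin d → ℤ, j ≠ j' →
      (∀ k, |j k| ≤ 3 * (N : ℤ)) → (∀ k, |j' k| ≤ 3 * (N : ℤ)) →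
      2 * δ ^ ((1 : ℝ) / 8) < |μ j - μ j'|)
    (hb2 : ∀ (n : Fin b → ℤ) (j j' : Fin d → ℤ),
      (∀ k, |n k| ≤ 2 * (N : ℤ)) →
      (∀ k, |j k| ≤ 3 * (N : ℤ)) → (∀ k, |j' k| ≤ 3 * (N : ℤ)) →
      (¬ ∃ k k' : Fin b, n = -Pi.single k 1 + Pi.single k' 1 ∧ j = β k ∧ j' = β k') →
      ¬ (n = 0 ∧ j = j') →
      2 * δ ^ ((1 : ℝ) / 8) < |(∑ k, (n k : ℝ) * μ (β k)) + μ j - μ j'|)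
    (σ : ℝ) :
    Set.ncard {p : (Fin b → ℤ) × (Fin d → ℤ) |
        (∀ k, |p.1 k| ≤ (N : ℤ)) ∧ (∀ k, |p.2 k| ≤ 3 * (N : ℤ)) ∧
        |σ + (∑ k, (p.1 k : ℝ) * μ (β k)) + μ p.2| ≤ δ ^ ((1 : ℝ) / 8)} ≤ b :=
  stmt11_general b d N hb δ β hβ μ hb2 σ
end

section
/- Let H be a self-adjoint operator on ℓ²(ℤ^d) with a complete orthonormal system of eigenfunctions {ψ_s}_{s∈ℤ^d}, each satisfying |ψ_s(l) − 1| ≤ ε^{1/5} at its localization center l (i.e. the point where |ψ_s| attains its maximum, assuming ψ_s(l) > 0 normalization in modulus) and |ψ_s(x)| ≤ ε^{(1/8)|x−l|₁} for x ≠ l, with 0 < ε small enough depending on d. Then for each lattice site x ∈ ℤ^d there exists exactly one eigenfunction in the family peaking at x. -/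
/-!
Write `q = ε^{1/8}`. At a localization center an eigenfunction has modulus at least `3/4`, so two
eigenfunctions peaking at the same site would contribute more than `1` to the Parseval sum
`∑ₛ ψₛ(x)² = 1` there. Hence centers are distinct, and if no eigenfunction peaked at `x`, every
term would obey `ψₛ(x)² ≤ q · q^{|x - lₛ|₁}` with distinct `lₛ ≠ x`; summing the product of
one-dimensional geometric series bounds the Parseval sum by `q (2/(1-q))^d < 1`.
-/

open Finset Function

def PeaksAt {α : Type*} (f : α → ℝ) (l : α) : Prop := ∀ x, |f x| ≤ |f l|

lemma Finset.sum_pow_le_inv_one_sub {q : ℝ} (hq0 : 0 ≤ q) (hq1 : q < 1) (T : Finset ℕ) :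
    ∑ n ∈ T, q ^ n ≤ (1 - q)⁻¹ :=
  tsum_geometric_of_lt_one hq0 hq1 ▸
    (summable_geometric_of_lt_one hq0 hq1).sum_le_tsum T fun n _ => pow_nonneg hq0 n

lemma Finset.sum_pow_natAbs_sub_le_of_injOn {q : ℝ} (hq0 : 0 ≤ q) (hq1 : q < 1) {c : ℤ}
    {J : Finset ℤ} (hJ : Set.InjOn (fun j => (c - j).natAbs) J) :
    ∑ j ∈ J, q ^ (c - j).natAbs ≤ (1 - q)⁻¹ := by
  rw [← Finset.sum_image hJ]
  exact Finset.sum_pow_le_inv_one_sub hq0 hq1 _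

lemma Finset.sum_pow_natAbs_sub_le {q : ℝ} (hq0 : 0 ≤ q) (hq1 : q < 1) (c : ℤ) (J : Finset ℤ) :
    ∑ j ∈ J, q ^ (c - j).natAbs ≤ 2 / (1 - q) := by
  rw [← Finset.sum_filter_add_sum_filter_not J (· ≤ c), div_eq_mul_inv, two_mul]
  have hle := Finset.sum_pow_natAbs_sub_le_of_injOn hq0 hq1 (c := c) (J := J.filter (· ≤ c))
    fun a ha b hb h => by simp only [mem_coe, mem_filter] at ha hb h; omega
  have hgt := Finset.sum_pow_natAbs_sub_le_of_injOn hq0 hq1 (c := c) (J := J.filter (¬ · ≤ c))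
    fun a ha b hb h => by simp only [mem_coe, mem_filter] at ha hb h; omega
  linarith

lemma Finset.sum_pow_sum_natAbs_sub_le {ι : Type*} [Fintype ι] {q : ℝ}
    (hq0 : 0 ≤ q) (hq1 : q < 1) (x : ι → ℤ) (G : Finset (ι → ℤ)) :
    ∑ y ∈ G, q ^ ∑ k, (x k - y k).natAbs ≤ (2 / (1 - q)) ^ Fintype.card ι := by
  classical
  set J : ι → Finset ℤ := fun k => G.image (· k)
  calc ∑ y ∈ G, q ^ ∑ k, (x k - y k).natAbs
      ≤ ∑ y ∈ Fintype.piFinset J, q ^ ∑ k, (x k - y k).natAbs :=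
        sum_le_sum_of_subset_of_nonneg
          (fun y hy => Fintype.mem_piFinset.2 fun k => mem_image_of_mem _ hy)
          fun _ _ _ => by positivity
    _ = ∏ k, ∑ j ∈ J k, q ^ (x k - j).natAbs := by
        simp only [← prod_pow_eq_pow_sum, prod_univ_sum]
    _ ≤ ∏ _k : ι, 2 / (1 - q) :=
        prod_le_prod (fun _ _ => sum_nonneg fun _ _ => by positivity)
          fun k _ => sum_pow_natAbs_sub_le hq0 hq1 (x k) (J k)
    _ = (2 / (1 - q)) ^ Fintype.card ι := by rw [prod_const, card_univ]

lemma Real.rpow_mul_sum_abs_sub_eq_pow {ι : Type*} [Fintype ι] {ε : ℝ} (hε : 0 ≤ ε) (a : ℝ)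
    (x y : ι → ℤ) :
    ε ^ (a * ((∑ k, |x k - y k| : ℤ) : ℝ)) = (ε ^ a) ^ ∑ k, (x k - y k).natAbs := by
  rw [Real.rpow_mul hε, ← Real.rpow_natCast]
  push_cast
  simp

lemma eq_of_one_lt_sq_add_sq {ι : Type*} {f : ι → ℝ} (hf : ∑' i, f i ^ 2 = 1) {i j : ι}
    (hij : 1 < f i ^ 2 + f j ^ 2) : i = j := by
  classical
  by_contra hne
  have hsum : Summable fun i => f i ^ 2 := by
    by_contra h
    rw [tsum_eq_zero_of_not_summable h] at hf
    exact zero_ne_one hf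
  have := hsum.sum_le_tsum {i, j} fun k _ => sq_nonneg (f k)
  rw [sum_pair hne, hf] at this
  linarith

lemma tsum_sq_le_of_decay {ι ι' : Type*} [Fintype ι'] {f : ι → ℝ}
    {c : ι → ι' → ℤ} (hc : Injective c) {x : ι' → ℤ} (hx : ∀ i, c i ≠ x) {q : ℝ}
    (hq0 : 0 ≤ q) (hq1 : q < 1) (hf : ∀ i, |f i| ≤ q ^ ∑ k, (x k - c i k).natAbs) :
    ∑' i, f i ^ 2 ≤ q * (2 / (1 - q)) ^ Fintype.card ι' := by
  classical
  have hdist : ∀ i, ∑ k, (x k - c i k).natAbs ≠ 0 := fun i h =>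
    hx i (funext fun k => by have := (sum_eq_zero_iff.1 h) k (mem_univ k); omega)
  have hsq : ∀ i, f i ^ 2 ≤ q * q ^ ∑ k, (x k - c i k).natAbs := fun i => calc
    f i ^ 2 = |f i| ^ 2 := (sq_abs _).symm
    _ ≤ (q ^ ∑ k, (x k - c i k).natAbs) ^ 2 := pow_le_pow_left₀ (abs_nonneg _) (hf i) 2
    _ ≤ q * q ^ ∑ k, (x k - c i k).natAbs := by
        rw [sq]
        exact mul_le_mul_of_nonneg_right (pow_le_of_le_one hq0 hq1.le (hdist i)) (by positivity)
  have hbound : 0 ≤ q * (2 / (1 - q)) ^ Fintype.card ι' :=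
    mul_nonneg hq0 (pow_nonneg (div_nonneg zero_le_two (by linarith)) _)
  refine tsum_le_of_sum_le' hbound fun F => ?_
  calc ∑ i ∈ F, f i ^ 2 ≤ ∑ i ∈ F, q * q ^ ∑ k, (x k - c i k).natAbs := sum_le_sum fun i _ => hsq i
    _ = q * ∑ y ∈ F.image c, q ^ ∑ k, (x k - y k).natAbs := by
        rw [← mul_sum, sum_image fun a _ b _ h => hc h]
    _ ≤ q * (2 / (1 - q)) ^ Fintype.card ι' :=
        mul_le_mul_of_nonneg_left (sum_pow_sum_natAbs_sub_le hq0 hq1 x _) hq0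

lemma mul_two_div_one_sub_pow_lt_one {q : ℝ} {d : ℕ} (hq : q ≤ (1 / 4) ^ (d + 1)) :
    q * (2 / (1 - q)) ^ d < 1 := by
  have hq2 : q ≤ 1 / 2 :=
    hq.trans ((pow_le_of_le_one (by norm_num) (by norm_num) d.succ_ne_zero).trans (by norm_num))
  have h0 : 0 ≤ 2 / (1 - q) := div_nonneg zero_le_two (by linarith)
  have h4 : 2 / (1 - q) ≤ 4 := by rw [div_le_iff₀ (by linarith)]; linarith
  calc q * (2 / (1 - q)) ^ d ≤ (1 / 4) ^ (d + 1) * 4 ^ d :=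
        mul_le_mul hq (pow_le_pow_left₀ h0 h4 d) (pow_nonneg h0 d) (by positivity)
    _ = 1 / 4 := by rw [pow_succ, mul_right_comm, ← mul_pow]; norm_num
    _ < 1 := by norm_num

theorem stmt12_general (d : ℕ) :
    ∃ ε₀ : ℝ, 0 < ε₀ ∧ ∀ (ε : ℝ) (ψ : (Fin d → ℤ) → (Fin d → ℤ) → ℝ),
      0 < ε → ε ≤ ε₀ →
      (∀ s s' : Fin d → ℤ,
        ∑' x : Fin d → ℤ, ψ s x * ψ s' x = if s = s' then 1 else 0) →
      (∀ x : Fin d → ℤ, ∑' s : Fin d → ℤ, ψ s x ^ 2 = 1) →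
      (∀ s : Fin d → ℤ, ∃ l : Fin d → ℤ, ∀ x, |ψ s x| ≤ |ψ s l|) →
      (∀ s l : Fin d → ℤ, (∀ x, |ψ s x| ≤ |ψ s l|) →
        |ψ s l - 1| ≤ ε ^ ((1 : ℝ) / 5) ∧
        ∀ x : Fin d → ℤ, x ≠ l →
          |ψ s x| ≤ ε ^ ((1 : ℝ) / 8 * ((∑ k, |x k - l k| : ℤ) : ℝ))) →
      ∀ x : Fin d → ℤ, ∃! s : Fin d → ℤ, ∀ y, |ψ s y| ≤ |ψ s x| := by
  refine ⟨((1 / 4) ^ (d + 1)) ^ 8, by positivity, fun ε ψ hε hε₀ _ hpar hcen hloc x => ?_⟩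
  have hq : ε ^ ((1 : ℝ) / 8) ≤ (1 / 4) ^ (d + 1) := by
    rw [one_div, Real.rpow_inv_le_iff_of_pos hε.le (by positivity) (by norm_num)]
    exact_mod_cast hε₀
  have hε1 : ε ≤ 1 :=
    hε₀.trans (pow_le_one₀ (by positivity) (pow_le_one₀ (by norm_num) (by norm_num)))
  have h15 : ε ^ ((1 : ℝ) / 5) ≤ ε ^ ((1 : ℝ) / 8) :=
    Real.rpow_le_rpow_of_exponent_ge hε hε1 (by norm_num)
  set q := ε ^ ((1 : ℝ) / 8)
  have hq0 : 0 ≤ q := by positivity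
  have hq4 : q ≤ 1 / 4 := hq.trans (pow_le_of_le_one (by norm_num) (by norm_num) d.succ_ne_zero)
  have hpeak : ∀ s l, PeaksAt (ψ s) l → 3 / 4 ≤ |ψ s l| := fun s l hl => by
    have := abs_le.1 (hloc s l hl).1
    rw [abs_of_nonneg (by linarith)]
    linarith
  have huniq : ∀ y s s', PeaksAt (ψ s) y → PeaksAt (ψ s') y → s = s' := fun y s s' hs hs' =>
    eq_of_one_lt_sq_add_sq (hpar y) <| by
      nlinarith [hpeak s y hs, hpeak s' y hs', sq_abs (ψ s y), sq_abs (ψ s' y)]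
  refine existsUnique_of_exists_of_unique ?_ (huniq x)
  by_contra! hnone
  choose l hl using hcen
  have hlx : ∀ s, l s ≠ x := fun s h => by obtain ⟨y, hy⟩ := hnone s; exact hy.not_ge (h ▸ hl s y)
  have hl_inj : Injective l := fun s s' h => huniq _ s s' (hl s) (by rw [h]; exact hl s')
  have hdecay : ∀ s, |ψ s x| ≤ q ^ ∑ k, (x k - l s k).natAbs := fun s => by
    rw [← Real.rpow_mul_sum_abs_sub_eq_pow hε.le]
    exact (hloc s (l s) (hl s)).2 x (hlx s).symm
  have hsum := tsum_sq_le_of_decay hl_inj hlx hq0 (by linarith) hdecay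
  rw [hpar x, Fintype.card_fin] at hsum
  linarith [mul_two_div_one_sub_pow_lt_one hq]

/-- Uniqueness of localization centers: for `ε` small enough (depending only on `d`),
if `{ψ_s}` is a complete orthonormal family on `ℓ²(ℤ^d)` whose members satisfy
`|ψ_s(l) − 1| ≤ ε^{1/5}` and `|ψ_s(x)| ≤ ε^{(1/8)|x−l|₁}` at every localization
center `l`, then for each lattice site `x` there is exactly one member of the
family peaking at `x`. -/
theorem stmt12 (d : ℕ) (hd : 1 ≤ d) :
    ∃ ε₀ : ℝ, 0 < ε₀ ∧ ∀ (ε : ℝ) (ψ : (Fin d → ℤ) → (Fin d → ℤ) → ℝ),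
      0 < ε → ε ≤ ε₀ →
      (∀ s s' : Fin d → ℤ,
        ∑' x : Fin d → ℤ, ψ s x * ψ s' x = if s = s' then 1 else 0) →
      (∀ x : Fin d → ℤ, ∑' s : Fin d → ℤ, ψ s x ^ 2 = 1) →
      (∀ s : Fin d → ℤ, ∃ l : Fin d → ℤ, ∀ x, |ψ s x| ≤ |ψ s l|) →
      (∀ s l : Fin d → ℤ, (∀ x, |ψ s x| ≤ |ψ s l|) →
        |ψ s l - 1| ≤ ε ^ ((1 : ℝ) / 5) ∧
        ∀ x : Fin d → ℤ, x ≠ l →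
          |ψ s x| ≤ ε ^ ((1 : ℝ) / 8 * ((∑ k, |x k - l k| : ℤ) : ℝ))) →
      ∀ x : Fin d → ℤ, ∃! s : Fin d → ℤ, ∀ y, |ψ s y| ≤ |ψ s x| :=
  stmt12_general d
end
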